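/- Let F be a Borel probability measure on [0,1] with F({0}) = 0. Then, as an identity in [0,∞]: (1/2) E[ 1/( W(1−W) ) ] = ∫_{(0,1]} ( −log(1−y) ) y^{−2} F(dy). In particular the critical selection value β* = ∫_{(0,1]} (−log(1−y)) y^{−2} F(dy) satisfies 2β* = E[ 1/(W(1−W)) ]. -/

import Mathlib

/-!
Given `Y = y ∈ (0,1]`, the integrand simplifies to `2u / (uy(1 - uy)) = (2/y) (1 - uy)⁻¹`,
and the substitution `v = 1 - uy` gives `∫₀¹ (1 - uy)⁻¹ du = -log(1 - y) / y`, so the inner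
integral is `2 (-log(1 - y)) / y²`; for `y = 1` it is infinite because `(1 - u)⁻¹` is not
integrable near `1`. Since `F` is carried by `(0,1]`, integrating against `F` and halving gives
the claim.
-/

open MeasureTheory Set ENNReal

lemma integral_inv_one_sub_mul {y : ℝ} (hy : y ≠ 0) (hy1 : y < 1) :
    ∫ u in (0:ℝ)..1, (1 - y * u)⁻¹ = -Real.log (1 - y) / y := by
  rw [intervalIntegral.integral_comp_sub_mul (fun x => x⁻¹) hy, mul_zero, sub_zero, mul_one,
    integral_inv_of_pos (by linarith) one_pos, one_div, Real.log_inv, smul_eq_mul, inv_mul_eq_div]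

lemma lintegral_Ioo_inv_one_sub_mul {y : ℝ} (hy : y ≠ 0) (hy1 : y < 1) :
    ∫⁻ u in Ioo (0:ℝ) 1, ENNReal.ofReal (1 - y * u)⁻¹
      = ENNReal.ofReal (-Real.log (1 - y) / y) := by
  have hden : ∀ u ∈ Icc (0:ℝ) 1, 0 < 1 - y * u := fun u hu => by
    rcases le_or_gt y 0 with h | h <;> nlinarith [hu.1, hu.2]
  have hcont : ContinuousOn (fun u : ℝ => (1 - y * u)⁻¹) (uIcc 0 1) := by
    rw [uIcc_of_le zero_le_one]
    exact ContinuousOn.inv₀ (by fun_prop) fun u hu => (hden u hu).ne'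
  have hpos : ∀ᵐ u ∂volume.restrict (Ioo (0:ℝ) 1), 0 ≤ (1 - y * u)⁻¹ := by
    filter_upwards [ae_restrict_mem measurableSet_Ioo] with u hu
    exact inv_nonneg.2 (hden u (Ioo_subset_Icc_self hu)).le
  rw [← ofReal_integral_eq_lintegral_ofReal
      ((intervalIntegrable_iff_integrableOn_Ioo_of_le zero_le_one).1 hcont.intervalIntegrable) hpos,
    ← integral_Ioc_eq_integral_Ioo, ← intervalIntegral.integral_of_le zero_le_one,
    integral_inv_one_sub_mul hy hy1]

lemma lintegral_Ioo_inv_one_sub :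
    ∫⁻ u in Ioo (0:ℝ) 1, ENNReal.ofReal (1 - u)⁻¹ = ⊤ := by
  have hpos : ∀ᵐ u ∂volume.restrict (Ioo (0:ℝ) 1), 0 ≤ (1 - u)⁻¹ := by
    filter_upwards [ae_restrict_mem measurableSet_Ioo] with u hu
    exact inv_nonneg.2 (by linarith [hu.2])
  by_contra h
  have hint := (lintegral_ofReal_ne_top_iff_integrable (by fun_prop) hpos).1 h
  have : IntervalIntegrable (fun u : ℝ => (u - 1)⁻¹) volume 0 1 := by
    rw [intervalIntegrable_iff_integrableOn_Ioo_of_le zero_le_one]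
    refine hint.neg.congr (ae_of_all _ fun u => ?_)
    simp only [Pi.neg_apply, ← inv_neg, neg_sub]
  simp at this

lemma inv_mul_one_sub_mul_density {u y : ℝ} (hu : u ∈ Ioo (0:ℝ) 1) (hy : 0 < y) (hy1 : y ≤ 1) :
    (ENNReal.ofReal (u * y * (1 - u * y)))⁻¹ * ENNReal.ofReal (2 * u)
      = ENNReal.ofReal (2 / y) * ENNReal.ofReal (1 - y * u)⁻¹ := by
  have hyu : 0 < 1 - y * u := by nlinarith [hu.1, hu.2]
  have hW : 0 < u * y * (1 - u * y) := by have := hu.1; rw [mul_comm u y]; positivity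
  rw [← ENNReal.ofReal_inv_of_pos hW, ← ENNReal.ofReal_mul (inv_pos.2 hW).le,
    ← ENNReal.ofReal_mul (by positivity)]
  congr 1
  field_simp [hu.1.ne', hy.ne', hyu.ne']

lemma lintegral_Ioo_inv_mul_one_sub_density {y : ℝ} (hy : 0 < y) (hy1 : y ≤ 1) :
    ∫⁻ u in Ioo (0:ℝ) 1, (ENNReal.ofReal (u * y * (1 - u * y)))⁻¹ * ENNReal.ofReal (2 * u)
      = 2 * ((if y = 1 then ⊤ else ENNReal.ofReal (-Real.log (1 - y))) / ENNReal.ofReal (y ^ 2)) := by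
  rw [setLIntegral_congr_fun measurableSet_Ioo fun u hu => inv_mul_one_sub_mul_density hu hy hy1,
    lintegral_const_mul _ (by fun_prop)]
  rcases hy1.eq_or_lt with rfl | hy1
  · simp [lintegral_Ioo_inv_one_sub]
  · rw [if_neg hy1.ne, lintegral_Ioo_inv_one_sub_mul hy.ne' hy1, ← ENNReal.ofReal_mul (by positivity),
      ← ENNReal.ofReal_div_of_pos (by positivity), ← ENNReal.ofReal_ofNat 2,
      ← ENNReal.ofReal_mul zero_le_two]
    congr 1
    field_simp

theorem stmt7 (F : Measure ℝ)
    (hF : F (Set.Icc (0:ℝ) 1)ᶜ = 0) (h0 : F {0} = 0) :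
    (1 / 2 : ℝ≥0∞) *
      (∫⁻ y, (∫⁻ u in Set.Ioo (0:ℝ) 1,
        (ENNReal.ofReal (u * y * (1 - u * y)))⁻¹ * ENNReal.ofReal (2 * u)) ∂F)
    = ∫⁻ y in Set.Ioc (0:ℝ) 1,
        (if y = 1 then ⊤ else ENNReal.ofReal (-Real.log (1 - y))) / ENNReal.ofReal (y ^ 2) ∂F := by
  have hIoc : F.restrict (Ioc 0 1) = F := by
    have hnull : F (Ioc 0 1)ᶜ = 0 := by
      rw [← Icc_sdiff_left, sdiff_eq, compl_inter, compl_compl]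
      exact measure_union_null hF h0
    exact Measure.restrict_eq_self_of_ae_mem (mem_ae_iff.2 hnull)
  nth_rw 1 [← hIoc]
  rw [← lintegral_const_mul' _ _ (by norm_num)]
  refine setLIntegral_congr_fun measurableSet_Ioc fun y hy => ?_
  rw [lintegral_Ioo_inv_mul_one_sub_density hy.1 hy.2, one_div, ← mul_assoc,
    ENNReal.inv_mul_cancel two_ne_zero ofNat_ne_top, one_mul]
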